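/- Let S be a t-conorm, T a t-norm, and X a set with at least two elements. Every fuzzy binary relation on X is strongly decomposable with respect to (T, S) if and only if S is continuous in its first coordinate and for all w ∈ [0,1], D¹_S(w) ∩ D⁰_T(w) ≠ ∅, where D¹_S(w) = {t ∈ [0,1] : S(t,w) = 1} and D⁰_T(w) = {t ∈ [0,1] : T(t,w) = 0}. -/

import Mathlib

/-!
Decomposing a relation amounts to decomposing each pair `(R x y, R y x) = (r, w)` separately:
if `w ≤ r`, take `I x y = w` and `P x y = t` with `S t w = r` and `T t w = 0`. So every relation
decomposes strongly iff every `r ≥ w` is reached by `S · w` at a point of `D⁰_T(w)`; a relation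
taking the values `r` and `w` on one pair of distinct points shows that this is also necessary.
Since `S · w` is monotone with `S 0 w = w`, reaching all of `[w, 1]` is equivalent to continuity
(a monotone map with an interval as range has no jumps), and reaching `1` inside the down-closed
set `D⁰_T(w)` is the condition `D¹_S(w) ∩ D⁰_T(w) ≠ ∅`; the intermediate value theorem on `[0, t]`
for `t` in this intersection gives the converse.
-/

structure Tconorm where
  S : unitInterval → unitInterval → unitInterval
  comm : ∀ a b, S a b = S b a
  assoc : ∀ a b c, S a (S b c) = S (S a b) c
  mono : ∀ a b c d, a ≤ c → b ≤ d → S a b ≤ S c d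
  S_zero : ∀ a, S a 0 = a
  S_one : ∀ a, S a 1 = 1

structure Tnorm where
  T : unitInterval → unitInterval → unitInterval
  comm : ∀ a b, T a b = T b a
  assoc : ∀ a b c, T a (T b c) = T (T a b) c
  mono : ∀ a b c d, a ≤ c → b ≤ d → T a b ≤ T c d
  T_one : ∀ a, T a 1 = a
  T_zero : ∀ a, T a 0 = 0

/-- A fuzzy binary relation `P` is asymmetric. -/
def FAsymm {X : Type*} (P : X → X → unitInterval) : Prop :=
  ∀ x y, 0 < P x y → P y x = 0

/-- A fuzzy binary relation `I` is symmetric. -/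
def FSymm {X : Type*} (I : X → X → unitInterval) : Prop :=
  ∀ x y, I x y = I y x

/-- `(P, I)` is a weak decomposition of `R` with respect to the t-conorm `S`. -/
def IsWeakDecomp {X : Type*} (S : Tconorm) (R P I : X → X → unitInterval) : Prop :=
  FAsymm P ∧ FSymm I ∧ (∀ x y, R x y = S.S (P x y) (I x y)) ∧
    ∀ x y, I x y = 1 → P x y = 0

/-- `(P, I)` is a strong decomposition of `R` with respect to `(T, S)`. -/
def IsStrongDecomp {X : Type*} (T : Tnorm) (S : Tconorm)
    (R P I : X → X → unitInterval) : Prop :=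
  FAsymm P ∧ FSymm I ∧ (∀ x y, R x y = S.S (P x y) (I x y)) ∧
    ∀ x y, T.T (P x y) (I x y) = 0

/-- The triplet `(R, P, I)` is a fuzzy preference (FP1–FP6). -/
def IsFuzzyPref {X : Type*} (R P I : X → X → unitInterval) : Prop :=
  (∀ x y, 0 < P x y → P y x = 0) ∧
  (∀ x y, I x y = I y x) ∧
  (∀ x y, P x y ≤ R x y) ∧
  (∀ x y, R y x < R x y ↔ 0 < P x y) ∧
  (∀ x y, P x y = 0 → R x y = I x y) ∧
  (∀ x y z w, I x y ≤ I z w → P x y ≤ P z w → R x y ≤ R z w)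

/-- The 1-interval of `w` for the t-conorm `S`. -/
def D1 (S : Tconorm) (w : unitInterval) : Set unitInterval := {t | S.S t w = 1}

/-- The 0-interval of `w` for the t-norm `T`. -/
def D0 (T : Tnorm) (w : unitInterval) : Set unitInterval := {t | T.T t w = 0}

open Set

theorem Monotone.continuous_of_Ici_subset_range {α β : Type*} [LinearOrder α]
    [TopologicalSpace α] [OrderTopology α] [LinearOrder β] [TopologicalSpace β]
    [OrderTopology β] [DenselyOrdered β] {f : α → β} {b : β} (hf : Monotone f)
    (hb : ∀ a, b ≤ f a) (hrange : Ici b ⊆ range f) : Continuous f := by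
  have hcodRestrict : Continuous fun a => (⟨f a, hb a⟩ : Ici b) := by
    refine Monotone.continuous_of_surjective (fun x y h => hf h) ?_
    rintro ⟨m, hm⟩
    obtain ⟨a, rfl⟩ := hrange hm
    exact ⟨a, rfl⟩
  exact continuous_subtype_val.comp hcodRestrict

namespace Tconorm

variable (S : Tconorm)

theorem zero_S (a : unitInterval) : S.S 0 a = a := by
  rw [S.comm, S.S_zero]

theorem le_S_left (a b : unitInterval) : b ≤ S.S a b :=
  (S.zero_S b).symm.trans_le (S.mono _ _ _ _ unitInterval.nonneg' le_rfl)

end Tconorm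

theorem Tnorm.zero_T (T : Tnorm) (a : unitInterval) : T.T 0 a = 0 := by
  rw [T.comm, T.T_zero]

def HasOrthogonalSolutions (T : Tnorm) (S : Tconorm) : Prop :=
  ∀ w r : unitInterval, w ≤ r → ∃ t, S.S t w = r ∧ T.T t w = 0

theorem hasOrthogonalSolutions_of_forall_isStrongDecomp {X : Type*} (hX : ∃ x y : X, x ≠ y)
    {S : Tconorm} {T : Tnorm}
    (H : ∀ R : X → X → unitInterval, ∃ P I : X → X → unitInterval, IsStrongDecomp T S R P I) :
    HasOrthogonalSolutions T S := by
  classical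
  intro w r hwr
  obtain ⟨x, y, hxy⟩ := hX
  obtain ⟨P, I, hasymm, hsymm, hR, hT⟩ :=
    H fun a b => if a = x ∧ b = y then r else if a = y ∧ b = x then w else 0
  have hRxy : S.S (P x y) (I x y) = r := by simpa using (hR x y).symm
  have hRyx : S.S (P y x) (I x y) = w := by
    simpa [hsymm y x, hxy, hxy.symm] using (hR y x).symm
  rcases (unitInterval.nonneg' (t := P x y)).eq_or_lt with hP | hP
  · have hIr : I x y = r := by rwa [← hP, S.zero_S] at hRxy
    have hrw : r ≤ w := hRyx ▸ hIr ▸ S.le_S_left _ _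
    exact ⟨0, by rw [S.zero_S, le_antisymm hwr hrw], T.zero_T w⟩
  · have hIw : I x y = w := by rwa [hasymm x y hP, S.zero_S] at hRyx
    exact ⟨P x y, hIw ▸ hRxy, hIw ▸ hT x y⟩

namespace HasOrthogonalSolutions

variable {T : Tnorm} {S : Tconorm}

theorem continuous_S_left (H : HasOrthogonalSolutions T S) (b : unitInterval) :
    Continuous fun a => S.S a b :=
  Monotone.continuous_of_Ici_subset_range (fun _ _ h => S.mono _ _ _ _ h le_rfl)
    (S.le_S_left · b) fun m hm => (H b m hm).imp fun _ ht => ht.1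

theorem d1_inter_d0_nonempty (H : HasOrthogonalSolutions T S) (w : unitInterval) :
    (D1 S w ∩ D0 T w).Nonempty :=
  H w 1 unitInterval.le_one'

theorem exists_isStrongDecomp (H : HasOrthogonalSolutions T S) {X : Type*}
    (R : X → X → unitInterval) : ∃ P I : X → X → unitInterval, IsStrongDecomp T S R P I := by
  classical
  choose t hSt hTt using H
  refine ⟨fun x y => if h : R y x < R x y then t (R y x) (R x y) h.le else 0,
    fun x y => min (R x y) (R y x), ?_, fun x y => min_comm _ _, ?_, ?_⟩
  · intro x y hP
    have hlt : R y x < R x y := by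
      by_contra h
      simp [h] at hP
    simp [not_lt_of_gt hlt]
  · intro x y
    by_cases h : R y x < R x y
    · simp [h, min_eq_right h.le, hSt]
    · simp [h, S.zero_S, min_eq_left (not_lt.mp h)]
  · intro x y
    by_cases h : R y x < R x y
    · simp [h, min_eq_right h.le, hTt]
    · simp [h, T.zero_T]

end HasOrthogonalSolutions

theorem hasOrthogonalSolutions_of_continuous {T : Tnorm} {S : Tconorm}
    (hcont : ∀ b, Continuous fun a => S.S a b) (hD : ∀ w, (D1 S w ∩ D0 T w).Nonempty) :
    HasOrthogonalSolutions T S := by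
  intro w r hwr
  obtain ⟨t, hSt, hTt⟩ := hD w
  have hr : r ∈ Icc (S.S 0 w) (S.S t w) := by
    rw [S.zero_S, show S.S t w = 1 from hSt]
    exact ⟨hwr, unitInterval.le_one'⟩
  obtain ⟨p, hpt, hpr⟩ := intermediate_value_Icc unitInterval.nonneg' (hcont w).continuousOn hr
  refine ⟨p, hpr, le_antisymm ?_ unitInterval.nonneg'⟩
  exact (T.mono _ _ _ _ hpt.2 le_rfl).trans_eq hTt

/-- Every fuzzy binary relation on a set with at least two elements is strongly
decomposable with respect to `(T, S)` iff `S` is continuous in the first coordinate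
and `D¹_S(w) ∩ D⁰_T(w) ≠ ∅` for all `w`. -/
theorem strong_decomposable_iff {X : Type*} (hX : ∃ x y : X, x ≠ y)
    (S : Tconorm) (T : Tnorm) :
    (∀ R : X → X → unitInterval, ∃ P I : X → X → unitInterval, IsStrongDecomp T S R P I) ↔
    ((∀ b, Continuous fun a => S.S a b) ∧ ∀ w, (D1 S w ∩ D0 T w).Nonempty) := by
  constructor
  · intro H
    have hsol := hasOrthogonalSolutions_of_forall_isStrongDecomp hX H
    exact ⟨hsol.continuous_S_left, hsol.d1_inter_d0_nonempty⟩
  · rintro ⟨hcont, hD⟩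
    exact (hasOrthogonalSolutions_of_continuous hcont hD).exists_isStrongDecomp
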